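/- arXiv:2112.11861 — 2 statements merged into one kernel-verified Lean document; each statement's English description precedes it below -/
import Mathlib

section
/- For λ ∈ [0,1), the shifted Borel pmf P(X = n) = e^{−λ(n+1)} (λ(n+1))ⁿ/(n+1)! for n ∈ ℕ sums to 1 and has mean E[X] = λ/(1−λ). -/
/-!
With `x = λ e^{-λ}`, the `n`-th term is `e^{-λ} (n+1)^{n+d} x^n / (n+1)!` (`d = 0` for the pmf,
`d = 1` for `(n+1)` times it), so both series are analytic in `λ` wherever `|x| < 1/e`, in
particular on `(-e^{-2}, 1)`. For `|λ| < e^{-2}` the double series obtained by expanding every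
`e^{-(n+1)λ}` converges absolutely; regrouping it by powers of `λ`, the coefficient of `λ^n` is
`Δ^{n+1}[s ↦ s^{n+d}](0) / (n+1)!` up to the missing `s = 0` term, i.e. `[n = 0]` for `d = 0` and
`1` for `d = 1`. Hence the sums are `1` and `1/(1-λ)` near `0`, and by the identity theorem on all
of `(-e^{-2}, 1)`.
-/

open Finset Topology FormalMultilinearSeries
open scoped fwdDiff Nat

theorem sum_range_choose_succ_mul_eq_fwdDiff_iter {R : Type*} [CommRing R] (f : R → R) (n : ℕ) :
    ∑ m ∈ range (n + 1), (-1 : R) ^ (n - m) * (n + 1).choose (m + 1) * f (m + 1) =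
      (Δ_[1])^[n + 1] f 0 + (-1) ^ n * f 0 := by
  rw [fwdDiff_iter_eq_sum_shift (h := (1 : R)) f (n + 1) 0, sum_range_succ' _ (n + 1)]
  simp [zsmul_eq_mul, pow_succ]

theorem HasSum.sum_antidiagonal {f : ℕ × ℕ → ℝ} {a : ℝ} (hf : HasSum f a) :
    HasSum (fun n => ∑ p ∈ antidiagonal n, f p) a := by
  refine ((Finset.HasAntidiagonal.sigmaAntidiagonalEquivProd.hasSum_iff).mpr hf).sigma fun n => ?_
  rw [← Finset.sum_coe_sort]
  exact hasSum_fintype _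

theorem Real.hasSum_pow_div_factorial (x : ℝ) : HasSum (fun n => x ^ n / n !) (Real.exp x) :=
  Real.exp_eq_exp_ℝ ▸ NormedSpace.expSeries_div_hasSum_exp x

theorem hasSum_mul_exp_iff_hasSum_antidiagonal (a r : ℕ → ℝ) {x s : ℝ}
    (h : Summable fun m => |a m| * |x| ^ m * Real.exp (|r m| * |x|)) :
    HasSum (fun m => a m * x ^ m * Real.exp (-(r m * x))) s ↔
      HasSum (fun n => x ^ n * ∑ p ∈ antidiagonal n, a p.1 * (-r p.1) ^ p.2 / p.2 !) s := by
  set F : ℕ × ℕ → ℝ := fun p => a p.1 * x ^ p.1 * ((-(r p.1 * x)) ^ p.2 / p.2 !)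
  have hrow (m : ℕ) : HasSum (fun j => F (m, j)) (a m * x ^ m * Real.exp (-(r m * x))) :=
    (Real.hasSum_pow_div_factorial _).mul_left _
  have habs_row (m : ℕ) :
      HasSum (fun j => |F (m, j)|) (|a m| * |x| ^ m * Real.exp (|r m| * |x|)) := by
    refine ((Real.hasSum_pow_div_factorial (|r m| * |x|)).mul_left (|a m| * |x| ^ m)).congr_fun
      fun j => ?_
    simp only [F, abs_mul, abs_div, abs_pow, abs_neg, Nat.abs_cast, mul_pow]
  have hF : Summable F := summable_abs_iff.mp <|
    (summable_prod_of_nonneg fun _ => abs_nonneg _).mpr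
      ⟨fun m => (habs_row m).summable, by simpa only [(habs_row _).tsum_eq] using h⟩
  have hrows := hF.hasSum.prod_fiberwise hrow
  have hdiag : HasSum (fun n => x ^ n * ∑ p ∈ antidiagonal n, a p.1 * (-r p.1) ^ p.2 / p.2 !)
      (∑' p, F p) := by
    convert hF.hasSum.sum_antidiagonal using 2 with n
    rw [mul_sum]
    refine sum_congr rfl fun p hp => ?_
    rw [← mem_antidiagonal.mp hp]
    simp only [F]
    ring
  exact ⟨fun hs => hs.unique hrows ▸ hdiag, fun hs => hs.unique hdiag ▸ hrows⟩

noncomputable def borelCoeff (d n : ℕ) : ℝ := ((n : ℝ) + 1) ^ (n + d) / (n + 1)!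

theorem borelCoeff_nonneg (d n : ℕ) : 0 ≤ borelCoeff d n := by
  unfold borelCoeff; positivity

theorem borelCoeff_le_exp {d : ℕ} (hd : d ≤ 1) (n : ℕ) :
    borelCoeff d n ≤ Real.exp 1 ^ (n + 1) := by
  rw [← Real.exp_nat_mul, mul_one]
  calc borelCoeff d n ≤ ((n : ℝ) + 1) ^ (n + 1) / (n + 1)! := by
        unfold borelCoeff
        gcongr
        · linarith
    _ ≤ Real.exp ((n : ℝ) + 1) := by
        exact_mod_cast Real.pow_div_factorial_le_exp ((n : ℝ) + 1) (by positivity) (n + 1)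
    _ = _ := by push_cast; ring_nf

theorem sum_antidiagonal_borelCoeff (d n : ℕ) :
    ∑ p ∈ antidiagonal n, borelCoeff d p.1 * (-((p.1 : ℝ) + 1)) ^ p.2 / p.2 ! =
      ((Δ_[1])^[n + 1] (fun s : ℝ => s ^ (n + d)) 0 + (-1) ^ n * 0 ^ (n + d)) / (n + 1)! := by
  rw [← sum_range_choose_succ_mul_eq_fwdDiff_iter (fun s : ℝ => s ^ (n + d)),
    Nat.sum_antidiagonal_eq_sum_range_succ_mk, sum_div]
  refine sum_congr rfl fun m hm => ?_
  have hmn : m ≤ n := Nat.lt_succ_iff.mp (mem_range.mp hm)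
  have hfact : ((n + 1)! : ℝ) = (n + 1).choose (m + 1) * (m + 1)! * (n - m)! := by
    rw [← Nat.succ_sub_succ n m]
    exact_mod_cast (Nat.choose_mul_factorial_mul_factorial (Nat.succ_le_succ hmn)).symm
  have hpow :
      ((m : ℝ) + 1) ^ (n + d) = ((m : ℝ) + 1) ^ (m + d) * ((m : ℝ) + 1) ^ (n - m) := by
    rw [← pow_add]; congr 1; omega
  rw [hfact, hpow, neg_pow, borelCoeff]
  have hchoose : ((n + 1).choose (m + 1) : ℝ) ≠ 0 := by
    exact_mod_cast (Nat.choose_pos (Nat.succ_le_succ hmn)).ne'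
  field_simp

theorem sum_antidiagonal_borelCoeff_zero (n : ℕ) :
    ∑ p ∈ antidiagonal n, borelCoeff 0 p.1 * (-((p.1 : ℝ) + 1)) ^ p.2 / p.2 ! =
      if n = 0 then 1 else 0 := by
  rw [sum_antidiagonal_borelCoeff, add_zero,
    congr_fun (fwdDiff_iter_pow_eq_zero_of_lt (R := ℝ) n.lt_succ_self) 0]
  rcases eq_or_ne n 0 with rfl | hn <;> simp [*]

theorem sum_antidiagonal_borelCoeff_one (n : ℕ) :
    ∑ p ∈ antidiagonal n, borelCoeff 1 p.1 * (-((p.1 : ℝ) + 1)) ^ p.2 / p.2 ! = 1 := by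
  rw [sum_antidiagonal_borelCoeff, congr_fun (fwdDiff_iter_eq_factorial (R := ℝ)) 0]
  simp [div_self, Nat.factorial_ne_zero]

theorem summable_borelCoeff_mul_exp {d : ℕ} (hd : d ≤ 1) {l : ℝ} (hl : |l| < Real.exp (-2)) :
    Summable fun m => |borelCoeff d m| * |l| ^ m * Real.exp (|(m : ℝ) + 1| * |l|) := by
  have hl₂ : |l| * Real.exp 2 < 1 := by
    calc |l| * Real.exp 2 < Real.exp (-2) * Real.exp 2 := by gcongr
      _ = 1 := by rw [← Real.exp_add]; norm_num
  have hl₁ : |l| ≤ 1 := by nlinarith [Real.add_one_le_exp 2, abs_nonneg l]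
  refine Summable.of_nonneg_of_le (fun m => by positivity) (fun m => ?_)
    ((summable_geometric_of_lt_one (by positivity) hl₂).mul_left (Real.exp 2))
  rw [abs_of_nonneg (borelCoeff_nonneg d m), abs_of_nonneg (by positivity : (0 : ℝ) ≤ m + 1)]
  calc borelCoeff d m * |l| ^ m * Real.exp (((m : ℝ) + 1) * |l|)
      ≤ Real.exp 1 ^ (m + 1) * |l| ^ m * Real.exp 1 ^ (m + 1) := by
        gcongr
        · exact borelCoeff_le_exp hd m
        · rw [← Real.exp_nat_mul]; push_cast; exact Real.exp_le_exp.mpr (by nlinarith)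
    _ = Real.exp 2 * (|l| * Real.exp 2) ^ m := by
        rw [show (2 : ℝ) = 1 + 1 by norm_num, Real.exp_add]; ring

theorem hasSum_borelCoeff_zero_of_abs_lt {l : ℝ} (hl : |l| < Real.exp (-2)) :
    HasSum (fun m => borelCoeff 0 m * l ^ m * Real.exp (-(((m : ℝ) + 1) * l))) 1 := by
  rw [hasSum_mul_exp_iff_hasSum_antidiagonal _ _ (summable_borelCoeff_mul_exp (Nat.zero_le 1) hl)]
  simp_rw [sum_antidiagonal_borelCoeff_zero]
  refine (hasSum_ite_eq 0 (1 : ℝ)).congr_fun fun n => ?_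
  split_ifs with hn <;> simp [hn]

theorem hasSum_borelCoeff_one_of_abs_lt {l : ℝ} (hl : |l| < Real.exp (-2)) :
    HasSum (fun m => borelCoeff 1 m * l ^ m * Real.exp (-(((m : ℝ) + 1) * l))) (1 - l)⁻¹ := by
  rw [hasSum_mul_exp_iff_hasSum_antidiagonal _ _ (summable_borelCoeff_mul_exp le_rfl hl)]
  simp_rw [sum_antidiagonal_borelCoeff_one, mul_one]
  exact hasSum_geometric_of_abs_lt_one (hl.trans (Real.exp_lt_one_iff.mpr (by norm_num)))

theorem radius_ofScalars_borelCoeff {d : ℕ} (hd : d ≤ 1) :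
    ENNReal.ofReal (Real.exp (-1)) ≤ (ofScalars ℝ (borelCoeff d)).radius := by
  refine (ofScalars ℝ (borelCoeff d)).le_radius_of_bound (Real.exp 1) fun n => ?_
  rw [ofScalars_norm, Real.norm_of_nonneg (borelCoeff_nonneg d n),
    Real.coe_toNNReal _ (Real.exp_pos _).le]
  calc borelCoeff d n * Real.exp (-1) ^ n ≤ Real.exp 1 ^ (n + 1) * Real.exp (-1) ^ n := by
        gcongr; exact borelCoeff_le_exp hd n
    _ = Real.exp 1 := by rw [pow_succ, mul_right_comm, ← mul_pow, ← Real.exp_add]; norm_num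

theorem hasFPowerSeriesOnBall_borelCoeff {d : ℕ} (hd : d ≤ 1) :
    HasFPowerSeriesOnBall (ofScalarsSum (borelCoeff d)) (ofScalars ℝ (borelCoeff d)) 0
      (ENNReal.ofReal (Real.exp (-1))) := by
  have hpos : 0 < ENNReal.ofReal (Real.exp (-1)) := ENNReal.ofReal_pos.mpr (Real.exp_pos _)
  have hrad := radius_ofScalars_borelCoeff hd
  exact ((ofScalars ℝ (borelCoeff d)).hasFPowerSeriesOnBall (hpos.trans_le hrad)).mono hpos hrad

theorem mul_exp_neg_mem_eball {t : ℝ} (ht : t ∈ Set.Ioo (-Real.exp (-2)) 1) :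
    t * Real.exp (-t) ∈ Metric.eball (0 : ℝ) (ENNReal.ofReal (Real.exp (-1))) := by
  obtain ⟨ht₀, ht₁⟩ := ht
  rw [Metric.eball_ofReal, Metric.mem_ball, dist_zero_right, Real.norm_eq_abs, abs_mul,
    abs_of_pos (Real.exp_pos _)]
  rcases le_or_gt 0 t with h | h
  · rw [abs_of_nonneg h]
    calc t * Real.exp (-t) < Real.exp (t - 1) * Real.exp (-t) := by
          gcongr; linarith [Real.add_one_lt_exp (sub_ne_zero.mpr ht₁.ne)]
      _ = Real.exp (-1) := by rw [← Real.exp_add]; ring_nf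
  · have he : Real.exp (-2) < 1 := Real.exp_lt_one_iff.mpr (by norm_num)
    rw [abs_of_neg h]
    calc -t * Real.exp (-t) < Real.exp (-2) * Real.exp 1 :=
          mul_lt_mul'' (by linarith) (Real.exp_lt_exp.mpr (by linarith)) (by linarith)
            (by positivity)
      _ = Real.exp (-1) := by rw [← Real.exp_add]; norm_num

theorem hasSum_borelCoeff_mul_exp {d : ℕ} (hd : d ≤ 1) {t : ℝ}
    (ht : t ∈ Set.Ioo (-Real.exp (-2)) 1) :
    HasSum (fun m => borelCoeff d m * t ^ m * Real.exp (-(((m : ℝ) + 1) * t)))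
      (Real.exp (-t) * ofScalarsSum (borelCoeff d) (t * Real.exp (-t))) := by
  have h := ((hasFPowerSeriesOnBall_borelCoeff hd).hasSum (mul_exp_neg_mem_eball ht)).mul_left
    (Real.exp (-t))
  rw [zero_add] at h
  refine h.congr_fun fun m => ?_
  rw [ofScalars_apply_eq, smul_eq_mul, mul_pow, ← Real.exp_nat_mul,
    show -(((m : ℝ) + 1) * t) = -t + m * -t by ring, Real.exp_add]
  ring

theorem analyticOnNhd_borelCoeff {d : ℕ} (hd : d ≤ 1) :
    AnalyticOnNhd ℝ (fun t => Real.exp (-t) * ofScalarsSum (borelCoeff d) (t * Real.exp (-t)))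
      (Set.Ioo (-Real.exp (-2)) 1) := by
  intro t ht
  have houter := (hasFPowerSeriesOnBall_borelCoeff hd).analyticAt_of_mem (mul_exp_neg_mem_eball ht)
  have hinner : AnalyticAt ℝ (fun s => s * Real.exp (-s)) t := by fun_prop
  exact analyticAt_id.neg.rexp.mul (houter.comp (f := fun s => s * Real.exp (-s)) hinner)

theorem hasSum_borelCoeff_mul_exp_of_forall_abs_lt {d : ℕ} (hd : d ≤ 1) {g : ℝ → ℝ}
    (hg : AnalyticOnNhd ℝ g (Set.Ioo (-Real.exp (-2)) 1))
    (hsmall : ∀ s, |s| < Real.exp (-2) →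
      HasSum (fun m => borelCoeff d m * s ^ m * Real.exp (-(((m : ℝ) + 1) * s))) (g s))
    {t : ℝ} (ht : t ∈ Set.Ioo (-Real.exp (-2)) 1) :
    HasSum (fun m => borelCoeff d m * t ^ m * Real.exp (-(((m : ℝ) + 1) * t))) (g t) := by
  have he : Real.exp (-2) < 1 := Real.exp_lt_one_iff.mpr (by norm_num)
  have hnear : (fun s => Real.exp (-s) * ofScalarsSum (borelCoeff d) (s * Real.exp (-s)))
      =ᶠ[𝓝 0] g := by
    filter_upwards [Metric.ball_mem_nhds (0 : ℝ) (Real.exp_pos (-2))] with s hs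
    rw [Metric.mem_ball, dist_zero_right, Real.norm_eq_abs] at hs
    exact (hasSum_borelCoeff_mul_exp hd ⟨(abs_lt.mp hs).1, (abs_lt.mp hs).2.trans he⟩).unique
      (hsmall s hs)
  have h0 : (0 : ℝ) ∈ Set.Ioo (-Real.exp (-2)) 1 := ⟨by simp [Real.exp_pos], one_pos⟩
  rw [← (analyticOnNhd_borelCoeff hd).eqOn_of_preconnected_of_eventuallyEq hg isPreconnected_Ioo
    h0 hnear ht]
  exact hasSum_borelCoeff_mul_exp hd ht

/-- The shifted Borel pmf sums to one and has mean `λ/(1-λ)` for `λ ∈ [0,1)`. -/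
theorem shifted_borel_sum_and_mean (l : ℝ) (hl : l ∈ Set.Ico (0:ℝ) 1) :
    HasSum (fun n : ℕ =>
        Real.exp (-(l * (n + 1))) * (l * (n + 1)) ^ n / (Nat.factorial (n + 1))) 1 ∧
      HasSum (fun n : ℕ => (n : ℝ) *
        (Real.exp (-(l * (n + 1))) * (l * (n + 1)) ^ n / (Nat.factorial (n + 1))))
        (l / (1 - l)) := by
  have hlU : l ∈ Set.Ioo (-Real.exp (-2)) 1 :=
    ⟨(neg_neg_of_pos (Real.exp_pos _)).trans_le hl.1, hl.2⟩
  have hmass := hasSum_borelCoeff_mul_exp_of_forall_abs_lt (Nat.zero_le 1) analyticOnNhd_const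
    (fun s => hasSum_borelCoeff_zero_of_abs_lt) hlU
  have hsize := hasSum_borelCoeff_mul_exp_of_forall_abs_lt le_rfl (g := fun t => (1 - t)⁻¹)
    (fun t ht => (analyticAt_const.sub analyticAt_id).inv (sub_ne_zero.mpr ht.2.ne'))
    (fun s => hasSum_borelCoeff_one_of_abs_lt) hlU
  have hpmf (n : ℕ) : Real.exp (-(l * (n + 1))) * (l * (n + 1)) ^ n / (Nat.factorial (n + 1)) =
      borelCoeff 0 n * l ^ n * Real.exp (-(((n : ℝ) + 1) * l)) := by
    rw [borelCoeff, add_zero, mul_pow, mul_comm l]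
    ring
  have hsize_pmf (n : ℕ) : ((n : ℝ) + 1) *
      (Real.exp (-(l * (n + 1))) * (l * (n + 1)) ^ n / (Nat.factorial (n + 1))) =
      borelCoeff 1 n * l ^ n * Real.exp (-(((n : ℝ) + 1) * l)) := by
    rw [borelCoeff, pow_succ, mul_pow, mul_comm l]
    ring
  refine ⟨hmass.congr_fun hpmf, ?_⟩
  have hmean := (hsize.congr_fun hsize_pmf).sub (hmass.congr_fun hpmf)
  rw [show (1 - l)⁻¹ - 1 = l / (1 - l) by field_simp [sub_ne_zero.mpr hl.2.ne']; ring] at hmean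
  exact hmean.congr_fun fun n => by ring
end

section
/- Let (Xₙ) be i.i.d. nonnegative-integer-valued with finite variance, ψ₀ C¹ with bounded derivative, and suppose r₀ = ψ₀(E[X₁]) − P(X₁=0) ≠ 0. Then |√n(ψ₀(μ̂ₙ) − P̂ₙ(0))| → ∞ in probability, i.e. for every M > 0, P(|√n(ψ₀(μ̂ₙ) − P̂ₙ(0))| > M) → 1 as n → ∞. -/
/-!
By the strong law of large numbers, `μ̂ₙ → E[X₁]` and `P̂ₙ(0) → P(X₁ = 0)` almost surely, so by
continuity of `ψ₀` the difference `ψ₀(μ̂ₙ) - P̂ₙ(0)` tends almost surely to `r₀ ≠ 0` and its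
`√n`-multiple diverges almost surely. Almost sure divergence gives divergence in probability
because a point that eventually lies in `Aₙ` lies in `⋂_{k ≥ n} Aₖ` for large `n`, and these
intersections increase to a set of full measure.
-/

open MeasureTheory ProbabilityTheory Filter

theorem tendsto_measure_univ_of_ae_eventually_mem {α : Type*} [MeasurableSpace α] {μ : Measure α}
    {A : ℕ → Set α} (h : ∀ᵐ x ∂μ, ∀ᶠ n in atTop, x ∈ A n) :
    Tendsto (fun n => μ (A n)) atTop (nhds (μ Set.univ)) := by
  set B : ℕ → Set α := fun n => ⋂ k ≥ n, A k
  have hB : Monotone B := fun _ _ hmn => Set.biInter_mono (fun _ hk => hmn.trans hk) fun _ _ => le_rfl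
  have hBfull : μ (⋃ n, B n) = μ Set.univ := by
    refine measure_congr (ae_eq_univ.2 (measure_eq_zero_iff_ae_notMem.2 ?_))
    filter_upwards [h] with x hx
    simpa [B] using hx.exists_forall_of_atTop
  refine tendsto_of_tendsto_of_tendsto_of_le_of_le (hBfull ▸ tendsto_measure_iUnion_atTop hB)
    tendsto_const_nhds (fun _ => measure_mono (Set.biInter_subset_of_mem le_rfl))
    (fun _ => measure_mono (Set.subset_univ _))

theorem tendsto_abs_sqrt_mul_atTop {a : ℕ → ℝ} {r : ℝ} (ha : Tendsto a atTop (nhds r))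
    (hr : r ≠ 0) : Tendsto (fun n : ℕ => |√n * a n|) atTop atTop := by
  simp only [abs_mul, abs_of_nonneg (Real.sqrt_nonneg _)]
  exact (Real.tendsto_sqrt_atTop.comp tendsto_natCast_atTop_atTop).atTop_mul_pos
    (abs_pos.2 hr) ha.abs

theorem strong_law_ae_comp {Ω α : Type*} [MeasurableSpace Ω] [MeasurableSpace α] {μ : Measure Ω}
    {X : ℕ → Ω → α} (hindep : Pairwise fun i j => IndepFun (X i) (X j) μ)
    (hident : ∀ i, IdentDistrib (X i) (X 0) μ μ) {f : α → ℝ} (hf : Measurable f)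
    (hint : Integrable (fun ω => f (X 0 ω)) μ) :
    ∀ᵐ ω ∂μ, Tendsto (fun n : ℕ => (∑ i ∈ Finset.range n, f (X i ω)) / n) atTop
      (nhds (∫ ω, f (X 0 ω) ∂μ)) :=
  strong_law_ae_real (fun i ω => f (X i ω)) hint (fun _ _ hij => (hindep hij).comp hf hf)
    fun i => (hident i).comp hf

theorem integral_ite_one_zero {Ω : Type*} [MeasurableSpace Ω] {μ : Measure Ω} {p : Ω → Prop}
    [DecidablePred p] (hp : MeasurableSet {ω | p ω}) :
    ∫ ω, (if p ω then (1 : ℝ) else 0) ∂μ = μ.real {ω | p ω} := by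
  rw [← integral_indicator_one hp]
  congr 1 with ω
  by_cases h : p ω <;> simp [h]

theorem test_statistic_diverges_under_alternative_general {Ω : Type*} [MeasurableSpace Ω]
    (P : Measure Ω) [IsProbabilityMeasure P]
    (X : ℕ → Ω → ℕ) (hmeas : ∀ i, Measurable (X i))
    (hindep : iIndepFun X P)
    (hident : ∀ i, Measure.map (X i) P = Measure.map (X 0) P)
    (hL2 : MemLp (fun ω => (X 0 ω : ℝ)) 2 P)
    (ψ₀ : ℝ → ℝ) (hψ : ContDiff ℝ 1 ψ₀)
    (halt : ψ₀ (∫ ω, (X 0 ω : ℝ) ∂P) - (P {ω | X 0 ω = 0}).toReal ≠ 0) :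
    ∀ M : ℝ, 0 < M →
      Tendsto (fun n : ℕ =>
          P {ω | M < |Real.sqrt n *
            (ψ₀ ((∑ l ∈ Finset.range n, (X l ω : ℝ)) / n)
              - (∑ l ∈ Finset.range n, if X l ω = 0 then (1:ℝ) else 0) / n)|})
        atTop (nhds 1) := by
  intro M _
  have hdistrib (i : ℕ) : IdentDistrib (X i) (X 0) P P :=
    ⟨(hmeas i).aemeasurable, (hmeas 0).aemeasurable, hident i⟩
  have hpair : Pairwise fun i j => IndepFun (X i) (X j) P := fun _ _ hij => hindep.indepFun hij
  have hX0 : MeasurableSet {ω | X 0 ω = 0} := hmeas 0 (measurableSet_singleton 0)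
  have hmean := strong_law_ae_comp hpair hdistrib measurable_from_top (hL2.integrable one_le_two)
  have hzero := strong_law_ae_comp hpair hdistrib (f := fun k => if k = 0 then (1 : ℝ) else 0)
    measurable_from_top <|
      .of_bound (Measurable.ite hX0 measurable_const measurable_const).aestronglyMeasurable 1
        (ae_of_all _ fun ω => by split_ifs <;> simp)
  rw [integral_ite_one_zero hX0] at hzero
  refine measure_univ (μ := P) ▸ tendsto_measure_univ_of_ae_eventually_mem ?_
  filter_upwards [hmean, hzero] with ω hω_mean hω_zero
  exact (tendsto_abs_sqrt_mul_atTop (((hψ.continuous.tendsto _).comp hω_mean).sub hω_zero)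
    halt).eventually_gt_atTop M

/-- Proposition 1 (consistency): if `r₀ = ψ₀(E[X₁]) - P(X₁=0) ≠ 0`, then
`|√n(ψ₀(μ̂ₙ) - P̂ₙ(0))| → ∞` in probability. -/
theorem test_statistic_diverges_under_alternative {Ω : Type*} [MeasurableSpace Ω]
    (P : Measure Ω) [IsProbabilityMeasure P]
    (X : ℕ → Ω → ℕ) (hmeas : ∀ i, Measurable (X i))
    (hindep : iIndepFun X P)
    (hident : ∀ i, Measure.map (X i) P = Measure.map (X 0) P)
    (hL2 : MemLp (fun ω => (X 0 ω : ℝ)) 2 P)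
    (ψ₀ : ℝ → ℝ) (hψ : ContDiff ℝ 1 ψ₀) (C : ℝ) (hC : ∀ x, |deriv ψ₀ x| ≤ C)
    (halt : ψ₀ (∫ ω, (X 0 ω : ℝ) ∂P) - (P {ω | X 0 ω = 0}).toReal ≠ 0) :
    ∀ M : ℝ, 0 < M →
      Tendsto (fun n : ℕ =>
          P {ω | M < |Real.sqrt n *
            (ψ₀ ((∑ l ∈ Finset.range n, (X l ω : ℝ)) / n)
              - (∑ l ∈ Finset.range n, if X l ω = 0 then (1:ℝ) else 0) / n)|})
        atTop (nhds 1) :=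
  test_statistic_diverges_under_alternative_general P X hmeas hindep hident hL2 ψ₀ hψ halt
end
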